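/- Reachability by swaps: Let T be an f-tree of a query Q satisfying the path constraint and let 𝒜 and ℬ be two nodes of T. Then there exists a finite sequence of swap operations (each exchanging a node with its parent as in the swap operator, and each preserving the path constraint) transforming T into an f-tree T′ of Q in which 𝒜 and ℬ are siblings or one is an ancestor of the other; in particular, roots of distinct trees of a forest count as siblings, so any two nodes can be brought into position for a merge or absorb selection operator. -/

import Mathlib

/-! ## Tuples and relations -/

/-- Attributes. -/
abbrev Att : Type := ℕ
/-- Values (a countable domain). -/
abbrev Val : Type := ℕ

/-- A tuple is a partial map from attributes to values; it is a tuple over a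
schema `S` if it is defined exactly on the attributes of `S`. -/
abbrev Tuple : Type := Att → Option Val

namespace Tuple

/-- `t` is a tuple over the schema `S`. -/
def isOver (t : Tuple) (S : Finset Att) : Prop := ∀ a, (t a).isSome ↔ a ∈ S

/-- Restriction of a tuple to a set of attributes. -/
def restrict (t : Tuple) (P : Finset Att) : Tuple :=
  fun a => if a ∈ P then t a else none

/-- Combination of two tuples (used for products/joins over disjoint schemas). -/
def join (t₁ t₂ : Tuple) : Tuple :=
  fun a => match t₁ a with
    | some v => some v
    | none => t₂ a

end Tuple

/-- The nullary tuple `⟨⟩`. -/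
def emptyTuple : Tuple := fun _ => none

/-- The tuple of the singleton relation `⟨A : a⟩`. -/
def singleTuple (A : Att) (a : Val) : Tuple := fun b => if b = A then some a else none

/-- Projection `π_P` of a relation. -/
def projRel (P : Finset Att) (R : Set Tuple) : Set Tuple := (fun t => t.restrict P) '' R

/-- Product of two relations (over disjoint schemas). -/
def prodRel (R₁ R₂ : Set Tuple) : Set Tuple := Set.image2 Tuple.join R₁ R₂

/-- `R` is a (finite) relation over schema `S`. -/
def IsRelOver (R : Set Tuple) (S : Finset Att) : Prop := R.Finite ∧ ∀ t ∈ R, t.isOver S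

/-! ## F-representations -/

/-- Factorised representations: expressions built from the empty relation,
the nullary tuple, singletons, unions and products. -/
inductive FRep : Type where
  | empty (S : Finset Att) : FRep
  | nullary : FRep
  | single (A : Att) (a : Val) : FRep
  | union (E₁ E₂ : FRep) : FRep
  | prod (E₁ E₂ : FRep) : FRep

namespace FRep

/-- The schema of an f-representation. -/
def schema : FRep → Finset Att
  | empty S => S
  | nullary => ∅
  | single A _ => {A}
  | union E₁ _ => E₁.schema
  | prod E₁ E₂ => E₁.schema ∪ E₂.schema

/-- Well-formedness: unions are over a common schema, products over disjoint schemas. -/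
def WF : FRep → Prop
  | empty _ => True
  | nullary => True
  | single _ _ => True
  | union E₁ E₂ => E₁.WF ∧ E₂.WF ∧ E₁.schema = E₂.schema
  | prod E₁ E₂ => E₁.WF ∧ E₂.WF ∧ Disjoint E₁.schema E₂.schema

/-- The relation `⟦E⟧` denoted by an f-representation `E`. -/
def denote : FRep → Set Tuple
  | empty _ => ∅
  | nullary => {emptyTuple}
  | single A a => {singleTuple A a}
  | union E₁ E₂ => E₁.denote ∪ E₂.denote
  | prod E₁ E₂ => prodRel E₁.denote E₂.denote

/-- The size `|E|`: the number of singletons in `E`. -/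
def size : FRep → ℕ
  | empty _ => 0
  | nullary => 0
  | single _ _ => 1
  | union E₁ E₂ => E₁.size + E₂.size
  | prod E₁ E₂ => E₁.size + E₂.size

/-- Number of `A`-singletons occurring in `E`. -/
def countAtt (A : Att) : FRep → ℕ
  | empty _ => 0
  | nullary => 0
  | single B _ => if B = A then 1 else 0
  | union E₁ E₂ => countAtt A E₁ + countAtt A E₂
  | prod E₁ E₂ => countAtt A E₁ + countAtt A E₂

end FRep

/-! ## F-trees -/

/-- An f-tree: a rooted tree whose nodes are labelled by sets of attributes.
A forest (`List FTree`) of such trees is an f-tree in the sense of the paper. -/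
inductive FTree : Type where
  | node (label : Finset Att) (children : List FTree) : FTree

/-- An f-tree over a schema is an unordered rooted forest. -/
abbrev Forest := List FTree

def FTree.label : FTree → Finset Att
  | .node l _ => l

def FTree.children : FTree → List FTree
  | .node _ cs => cs

/-- The list of node labels of a tree. -/
def FTree.nodes : FTree → List (Finset Att)
  | .node l cs => l :: (cs.attach.map (fun c => FTree.nodes c.1)).flatten
decreasing_by
  have := List.sizeOf_lt_of_mem c.2
  simp only [FTree.node.sizeOf_spec]
  omega

/-- The list of node labels of a forest. -/
def forestNodes (F : Forest) : List (Finset Att) := (F.map FTree.nodes).flatten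

/-- All attributes appearing in a tree. -/
def FTree.attrs (t : FTree) : Finset Att := t.nodes.foldr (· ∪ ·) ∅

/-- The root-to-leaf paths of a tree, as lists of labels. -/
def FTree.paths : FTree → List (List (Finset Att))
  | .node l cs =>
    match (cs.attach.map (fun c => FTree.paths c.1)).flatten with
    | [] => [[l]]
    | ps => ps.map (l :: ·)
decreasing_by
  have := List.sizeOf_lt_of_mem c.2
  simp only [FTree.node.sizeOf_spec]
  omega

/-- The root-to-leaf paths of a forest. -/
def forestPaths (F : Forest) : List (List (Finset Att)) := (F.map FTree.paths).flatten

/-- `F` is an f-tree over the schema `S`: labels are nonempty, pairwise disjoint,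
and cover exactly `S`. -/
def IsFTreeOver (S : Finset Att) (F : Forest) : Prop :=
  (∀ l ∈ forestNodes F, l.Nonempty) ∧
  (forestNodes F).Pairwise (fun l₁ l₂ => Disjoint l₁ l₂) ∧
  (∀ a : Att, a ∈ S ↔ ∃ l ∈ forestNodes F, a ∈ l)

/-! ## F-representations over f-trees -/

mutual
  /-- `OverForest E F`: `E` is an f-representation over the forest `F`
  (a product of f-representations over the trees of `F`; over the empty forest
  it is `∅` or `⟨⟩`). -/
  inductive OverForest : FRep → Forest → Prop where
    | empty : OverForest (.empty ∅) []
    | nullary : OverForest .nullary []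
    | one {E : FRep} {t : FTree} : OverTree E t → OverForest E [t]
    | cons {E F : FRep} {t : FTree} {ts : Forest} :
        OverTree E t → OverForest F ts → ts ≠ [] → OverForest (.prod E F) (t :: ts)

  /-- `OverTree E t`: `E` is an f-representation over the tree `t`. -/
  inductive OverTree : FRep → FTree → Prop where
    | mk {E : FRep} {l : Finset Att} {cs : List FTree} {vs : Set Val} :
        OverUnion E l cs vs → OverTree E (.node l cs)

  /-- `OverUnion E l cs vs`: `E` is a union, over the distinct values in `vs`,
  of groups `⟨A₁:a⟩ × ⋯ × ⟨A_k:a⟩ × E_a` for the node labelled `l` with child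
  forest `cs`. -/
  inductive OverUnion : FRep → Finset Att → List FTree → Set Val → Prop where
    | empty {l : Finset Att} {cs : List FTree} :
        OverUnion (.empty ((FTree.node l cs).attrs)) l cs ∅
    | group {E : FRep} {l : Finset Att} {cs : List FTree} {a : Val} :
        OverGroup E l cs a → OverUnion E l cs {a}
    | union {E₁ E₂ : FRep} {l : Finset Att} {cs : List FTree} {vs₁ vs₂ : Set Val} :
        OverUnion E₁ l cs vs₁ → OverUnion E₂ l cs vs₂ → Disjoint vs₁ vs₂ →
        OverUnion (.union E₁ E₂) l cs (vs₁ ∪ vs₂)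

  /-- `OverGroup E l cs a`: `E` is `⟨A₁:a⟩ × ⋯ × ⟨A_k:a⟩ × E_a` where
  `{A₁,…,A_k} = l` and `E_a` is over the child forest `cs` (omitted when `cs` is empty). -/
  inductive OverGroup : FRep → Finset Att → List FTree → Val → Prop where
    | leaf {E : FRep} {l : Finset Att} {a : Val} :
        SingProd E l a → OverGroup E l [] a
    | inner {E F : FRep} {l : Finset Att} {cs : List FTree} {a : Val} :
        SingProd E l a → OverForest F cs → cs ≠ [] → OverGroup (.prod E F) l cs a

  /-- `SingProd E l a`: `E` is the product of singletons `⟨A:a⟩` for the attributes `A ∈ l`. -/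
  inductive SingProd : FRep → Finset Att → Val → Prop where
    | single {A : Att} {a : Val} : SingProd (.single A a) {A} a
    | prod {E₁ E₂ : FRep} {l₁ l₂ : Finset Att} {a : Val} :
        SingProd E₁ l₁ a → SingProd E₂ l₂ a → Disjoint l₁ l₂ →
        SingProd (.prod E₁ E₂) (l₁ ∪ l₂) a
end

/-- `R` admits an f-representation over the f-tree (forest) `F`. -/
def HasFRepOver (R : Set Tuple) (F : Forest) : Prop :=
  ∃ E : FRep, OverForest E F ∧ E.denote = R

/-! ## Queries -/

/-- A select-project-join query `Q = π_P σ_φ (R₁ × ⋯ × R_n)`: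
`n` relation symbols with given schemas, a conjunction `eqs` of attribute
equalities, and a projection list `proj`. -/
structure Query where
  n : ℕ
  schemas : Fin n → Finset Att
  eqs : List (Att × Att)
  proj : Finset Att

namespace Query

/-- All attributes of the query. -/
def atts (Q : Query) : Finset Att := Finset.univ.biUnion Q.schemas

/-- Well-formedness: relation schemas are pairwise disjoint, and the projection
list and equalities mention only attributes of the query. -/
def WF (Q : Query) : Prop :=
  (∀ i j : Fin Q.n, i ≠ j → Disjoint (Q.schemas i) (Q.schemas j)) ∧
  Q.proj ⊆ Q.atts ∧ ∀ p ∈ Q.eqs, p.1 ∈ Q.atts ∧ p.2 ∈ Q.atts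

/-- A database for `Q` assigns a finite relation of the right schema to each
relation symbol. -/
def IsDB (Q : Query) (D : Fin Q.n → Set Tuple) : Prop :=
  ∀ i, (D i).Finite ∧ ∀ t ∈ D i, t.isOver (Q.schemas i)

/-- The query result `Q(D)`. -/
def result (Q : Query) (D : Fin Q.n → Set Tuple) : Set Tuple :=
  { t | ∃ f : Tuple, f.isOver Q.atts ∧ (∀ i, f.restrict (Q.schemas i) ∈ D i) ∧
      (∀ p ∈ Q.eqs, f p.1 = f p.2) ∧ t = f.restrict Q.proj }

/-- Attributes transitively equal under the equalities of `φ`. -/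
def equivAtt (Q : Query) : Att → Att → Prop :=
  Relation.EqvGen (fun a b => (a, b) ∈ Q.eqs ∨ (b, a) ∈ Q.eqs)

open scoped Classical in
/-- The equivalence class of an attribute. -/
noncomputable def cls (Q : Query) (a : Att) : Finset Att :=
  Q.atts.filter (fun b => Q.equivAtt a b)

/-- `F` is an f-tree of the query `Q`: its nodes are labelled exactly by the
equivalence classes of the attributes in the projection list, one node per class. -/
def IsFTreeOf (Q : Query) (F : Forest) : Prop :=
  (forestNodes F).Nodup ∧
  ∀ l : Finset Att, l ∈ forestNodes F ↔ ∃ a ∈ Q.proj, l = Q.cls a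

/-- The path constraint: for each relation of `Q`, all nodes labelled by classes
containing its attributes lie on a single root-to-leaf path. -/
def PathConstraint (Q : Query) (F : Forest) : Prop :=
  ∀ i : Fin Q.n, ∃ p ∈ forestPaths F, ∀ l ∈ forestNodes F,
    (l ∩ Q.schemas i).Nonempty → l ∈ p

/-- A fractional edge cover of the classes on a path `p` by the relations of `Q`. -/
def IsFracCover (Q : Query) (p : List (Finset Att)) (x : Fin Q.n → ℝ) : Prop :=
  (∀ i, 0 ≤ x i) ∧
  ∀ l ∈ p, 1 ≤ ∑ i, (if (l ∩ Q.schemas i).Nonempty then x i else 0)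

/-- The fractional edge cover number `ρ*(p)` of a path `p`. -/
noncomputable def rhoStar (Q : Query) (p : List (Finset Att)) : ℝ :=
  sInf { c : ℝ | ∃ x, Q.IsFracCover p x ∧ c = ∑ i, x i }

/-- The parameter `s(T)`: the maximum of `ρ*(p)` over all root-to-leaf paths of `F`. -/
noncomputable def sParam (Q : Query) (F : Forest) : ℝ :=
  sSup { r : ℝ | ∃ p ∈ forestPaths F, r = Q.rhoStar p }

/-- The size `|D|` of a database: the total number of tuples. -/
noncomputable def dbSize (Q : Query) (D : Fin Q.n → Set Tuple) : ℕ :=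
  ∑ i, (D i).ncard

end Query

/-- No relation of `Q` has attributes both in the class `lA` and in a class
labelling a node of the tree `t`. -/
def IndepOf (Q : Query) (lA : Finset Att) (t : FTree) : Prop :=
  ∀ i : Fin Q.n,
    ¬ ((lA ∩ Q.schemas i).Nonempty ∧ ∃ l ∈ t.nodes, (l ∩ Q.schemas i).Nonempty)

/-- The swap operator `χ_{A,B}`: somewhere in the forest, a child `B` (labelled
`lB`, with children `csB`) of a node `A` (labelled `lA`) is made the parent of
`A`; the children `csBB` of `B` that are independent of `A`'s class stay with
`B`, and the remaining children `csBAB` of `B`, together with `A`'s other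
subtrees, become children of `A`. -/
inductive SwapStep (Q : Query) : Forest → Forest → Prop where
  | here {lA lB : Finset Att} {csA₁ csA₂ csB csBB csBAB : Forest} {rest : Forest}
      (hBB : ∀ t ∈ csBB, IndepOf Q lA t)
      (hBAB : ∀ t ∈ csBAB, ¬ IndepOf Q lA t)
      (hperm : csB.Perm (csBB ++ csBAB)) :
      SwapStep Q (FTree.node lA (csA₁ ++ FTree.node lB csB :: csA₂) :: rest)
                 (FTree.node lB (csBB ++ [FTree.node lA (csBAB ++ (csA₁ ++ csA₂))]) :: rest)
  | tail {t : FTree} {ts ts' : Forest} :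
      SwapStep Q ts ts' → SwapStep Q (t :: ts) (t :: ts')
  | inside {l : Finset Att} {cs cs' : Forest} {rest : Forest} :
      SwapStep Q cs cs' →
      SwapStep Q (FTree.node l cs :: rest) (FTree.node l cs' :: rest)

/-- All children lists occurring in a tree. -/
def FTree.childLists : FTree → List (List FTree)
  | .node _ cs => cs :: (cs.attach.map (fun c => FTree.childLists c.1)).flatten
decreasing_by
  have := List.sizeOf_lt_of_mem c.2
  simp only [FTree.node.sizeOf_spec]
  omega

/-- All sibling lists of a forest: the list of roots, and every children list
of a node. -/
def forestLists (F : Forest) : List (List FTree) :=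
  F :: (F.map FTree.childLists).flatten

/-- Two labels are siblings in `F`: they label two trees occurring in the same
sibling list (in particular, roots of distinct trees of the forest count as
siblings). -/
def Siblings (F : Forest) (l₁ l₂ : Finset Att) : Prop :=
  ∃ L ∈ forestLists F, (∃ t ∈ L, FTree.label t = l₁) ∧ (∃ t ∈ L, FTree.label t = l₂)

/-- Two labels lie on a common root-to-leaf path of `F` (so one labels an
ancestor of the other, or they coincide). -/
def OnSamePath (F : Forest) (l₁ l₂ : Finset Att) : Prop :=
  ∃ p ∈ forestPaths F, l₁ ∈ p ∧ l₂ ∈ p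

/-
Swapping a node with its parent permutes the node labels and preserves the path constraint. A path
that covers the nodes of a relation and runs through the swapped pair is replaced by a path through
both of them in their new order, continuing into the same subtree. The one subtle case is a path
descending into a child of `ℬ` that stays with `ℬ`: if the class of `𝒜` meets the relation, that
child contains no node of the relation, so any path through `ℬ` and `𝒜` will do; otherwise the new
path may skip `𝒜`. Hence repeated swaps raise `𝒜` to a root. Then `ℬ` either lies in the tree of
`𝒜`, on a path from its root, or in another tree, whose root it becomes in turn.
-/

theorem FTree.induction {motive : FTree → Prop}
    (node : ∀ l cs, (∀ c ∈ cs, motive c) → motive (FTree.node l cs)) : ∀ t, motive t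
  | .node l cs => node l cs fun c _ => FTree.induction node c
decreasing_by
  have := List.sizeOf_lt_of_mem ‹c ∈ cs›
  simp only [FTree.node.sizeOf_spec]
  omega

@[simp] theorem forestNodes_nil : forestNodes [] = [] := rfl

@[simp] theorem forestNodes_cons (t : FTree) (ts : Forest) :
    forestNodes (t :: ts) = t.nodes ++ forestNodes ts := by
  simp [forestNodes]

@[simp] theorem forestNodes_append (F G : Forest) :
    forestNodes (F ++ G) = forestNodes F ++ forestNodes G := by
  simp [forestNodes]

theorem mem_forestNodes_iff {x : Finset Att} {F : Forest} :
    x ∈ forestNodes F ↔ ∃ t ∈ F, x ∈ t.nodes := by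
  simp [forestNodes]

theorem forestNodes_perm_of_perm {F G : Forest} (h : F.Perm G) :
    (forestNodes F).Perm (forestNodes G) :=
  (h.map FTree.nodes).flatten

@[simp] theorem forestPaths_nil : forestPaths [] = [] := rfl

theorem forestPaths_cons (t : FTree) (ts : Forest) :
    forestPaths (t :: ts) = t.paths ++ forestPaths ts := by
  simp [forestPaths]

theorem forestPaths_append (F G : Forest) :
    forestPaths (F ++ G) = forestPaths F ++ forestPaths G := by
  simp [forestPaths]

theorem mem_forestPaths_iff {p : List (Finset Att)} {F : Forest} :
    p ∈ forestPaths F ↔ ∃ t ∈ F, p ∈ t.paths := by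
  simp [forestPaths]

namespace FTree

@[simp] theorem nodes_node (l : Finset Att) (cs : Forest) :
    (node l cs).nodes = l :: forestNodes cs := by
  rw [nodes]
  simp [forestNodes]

theorem paths_node (l : Finset Att) (cs : Forest) :
    (node l cs).paths =
      if forestPaths cs = [] then [[l]] else (forestPaths cs).map (l :: ·) := by
  rw [paths]
  have h : (cs.attach.map fun c => paths c.1).flatten = forestPaths cs := by
    simp [forestPaths]
  rw [h]
  cases forestPaths cs <;> simp

theorem paths_ne_nil (t : FTree) : t.paths ≠ [] := by
  cases t with
  | node l cs =>
    rw [paths_node]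
    split <;> simp_all

theorem mem_paths_node_iff {p : List (Finset Att)} {l : Finset Att} {cs : Forest} :
    p ∈ (node l cs).paths ↔ ∃ q, p = l :: q ∧ (q ∈ forestPaths cs ∨ q = [] ∧ cs = []) := by
  have hnil : forestPaths cs = [] ↔ cs = [] := by
    cases cs <;> simp [forestPaths_cons, paths_ne_nil]
  rw [paths_node]
  split_ifs with h
  · simp [hnil.1 h]
  · simp only [List.mem_map, ← hnil]
    constructor
    · rintro ⟨q, hq, rfl⟩
      exact ⟨q, rfl, Or.inl hq⟩
    · rintro ⟨q, rfl, hq | ⟨-, h'⟩⟩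
      exacts [⟨q, hq, rfl⟩, (h h').elim]

theorem mem_paths_node_of_ne_nil {p : List (Finset Att)} {l : Finset Att} {cs : Forest}
    (hcs : cs ≠ []) : p ∈ (node l cs).paths ↔ ∃ q ∈ forestPaths cs, p = l :: q := by
  rw [mem_paths_node_iff]
  constructor
  · rintro ⟨q, rfl, hq | ⟨-, h⟩⟩
    exacts [⟨q, hq, rfl⟩, (hcs h).elim]
  · rintro ⟨q, hq, rfl⟩
    exact ⟨q, rfl, Or.inl hq⟩

theorem cons_mem_paths_node {q : List (Finset Att)} {l : Finset Att} {cs : Forest}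
    (hq : q ∈ forestPaths cs) : l :: q ∈ (node l cs).paths :=
  mem_paths_node_iff.2 ⟨q, rfl, Or.inl hq⟩

theorem label_mem_of_mem_paths {p : List (Finset Att)} {t : FTree} (hp : p ∈ t.paths) :
    t.label ∈ p := by
  cases t
  obtain ⟨q, rfl, -⟩ := mem_paths_node_iff.1 hp
  exact List.mem_cons_self

theorem subset_nodes_of_mem_paths : ∀ {t : FTree} {p : List (Finset Att)}, p ∈ t.paths →
    p ⊆ t.nodes := by
  intro t
  induction t using FTree.induction with
  | node l cs ih =>
    intro p hp
    obtain ⟨q, rfl, hq | ⟨rfl, -⟩⟩ := mem_paths_node_iff.1 hp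
    · obtain ⟨c, hc, hqc⟩ := mem_forestPaths_iff.1 hq
      rw [nodes_node]
      exact List.cons_subset_cons _ fun x hx => mem_forestNodes_iff.2 ⟨c, hc, ih c hc hqc hx⟩
    · simp

theorem exists_mem_paths_of_mem_nodes : ∀ {t : FTree} {x : Finset Att}, x ∈ t.nodes →
    ∃ p ∈ t.paths, x ∈ p := by
  intro t
  induction t using FTree.induction with
  | node l cs ih =>
    intro x hx
    rw [nodes_node, List.mem_cons] at hx
    rcases hx with rfl | hx
    · obtain ⟨p, hp⟩ := List.exists_mem_of_ne_nil _ (paths_ne_nil (node x cs))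
      exact ⟨p, hp, label_mem_of_mem_paths hp⟩
    · obtain ⟨c, hc, hxc⟩ := mem_forestNodes_iff.1 hx
      obtain ⟨q, hq, hxq⟩ := ih c hc hxc
      exact ⟨l :: q, cons_mem_paths_node (mem_forestPaths_iff.2 ⟨c, hc, hq⟩),
        List.mem_cons_of_mem _ hxq⟩

end FTree

open FTree

theorem onSamePath_label_of_mem_nodes {F : Forest} {t : FTree} {x : Finset Att} (ht : t ∈ F)
    (hx : x ∈ t.nodes) : OnSamePath F t.label x :=
  let ⟨p, hp, hxp⟩ := exists_mem_paths_of_mem_nodes hx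
  ⟨p, mem_forestPaths_iff.2 ⟨t, ht, hp⟩, label_mem_of_mem_paths hp, hxp⟩

theorem siblings_labels_of_mem {F : Forest} {t u : FTree} (ht : t ∈ F) (hu : u ∈ F) :
    Siblings F t.label u.label :=
  ⟨F, List.mem_cons_self, ⟨t, ht, rfl⟩, ⟨u, hu, rfl⟩⟩

theorem Query.IsFTreeOf.of_perm {Q : Query} {F F' : Forest}
    (h : (forestNodes F).Perm (forestNodes F')) (hF : Q.IsFTreeOf F) : Q.IsFTreeOf F' :=
  ⟨h.nodup_iff.1 hF.1, fun l => by rw [← hF.2 l, h.mem_iff]⟩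

namespace SwapStep

variable {Q : Query} {F F' : Forest}

theorem ne_nil (h : SwapStep Q F F') : F ≠ [] := by
  cases h <;> simp

theorem append_left (h : SwapStep Q F F') (G : Forest) : SwapStep Q (G ++ F) (G ++ F') := by
  induction G with
  | nil => exact h
  | cons t G ih => exact ih.tail

theorem forestNodes_perm (h : SwapStep Q F F') : (forestNodes F).Perm (forestNodes F') := by
  induction h with
  | @here lA lB csA₁ csA₂ csB csBB csBAB rest _ _ hperm =>
    have hB := forestNodes_perm_of_perm hperm
    rw [forestNodes_append, List.perm_iff_count] at hB
    rw [List.perm_iff_count]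
    intro a
    have := hB a
    simp only [forestNodes_cons, forestNodes_append, nodes_node, List.count_append,
      List.count_cons, forestNodes_nil, List.count_nil] at this ⊢
    omega
  | tail _ ih => simpa using ih.append_left _
  | @inside l _ _ rest _ ih => simpa using (ih.cons l).append_right (forestNodes rest)

theorem exists_here (Q : Query) (lA lB : Finset Att) (csA₁ csA₂ csB rest : Forest) :
    ∃ t, t.label = lB ∧
      SwapStep Q (node lA (csA₁ ++ node lB csB :: csA₂) :: rest) (t :: rest) := by
  classical
  exact ⟨_, rfl, here (csBB := csB.filter (IndepOf Q lA ·))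
    (csBAB := csB.filter fun t => !decide (IndepOf Q lA t)) (by simp) (by simp)
    (List.filter_append_perm _ csB).symm⟩

theorem exists_path_of_here {i : Fin Q.n} {lA lB : Finset Att} {csA₁ csA₂ csB csBB csBAB : Forest}
    (hBB : ∀ t ∈ csBB, IndepOf Q lA t) (hperm : csB.Perm (csBB ++ csBAB))
    {p : List (Finset Att)} (hp : p ∈ (node lA (csA₁ ++ node lB csB :: csA₂)).paths) :
    ∃ p' ∈ (node lB (csBB ++ [node lA (csBAB ++ (csA₁ ++ csA₂))])).paths,
      ∀ l ∈ p, (l ∩ Q.schemas i).Nonempty → l ∈ p' := by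
  set A' := node lA (csBAB ++ (csA₁ ++ csA₂))
  have under_A : ∀ q ∈ forestPaths (csBAB ++ (csA₁ ++ csA₂)),
      lB :: lA :: q ∈ (node lB (csBB ++ [A'])).paths := fun q hq =>
    cons_mem_paths_node (mem_forestPaths_iff.2 ⟨A', by simp, cons_mem_paths_node hq⟩)
  have under_B : ∀ q ∈ forestPaths csBB, lB :: q ∈ (node lB (csBB ++ [A'])).paths :=
    fun q hq => cons_mem_paths_node (by rw [forestPaths_append]; exact List.mem_append_left _ hq)
  obtain ⟨r, hr⟩ := List.exists_mem_of_ne_nil _ (paths_ne_nil A')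
  have through_A : lB :: r ∈ (node lB (csBB ++ [A'])).paths :=
    cons_mem_paths_node (mem_forestPaths_iff.2 ⟨A', by simp, hr⟩)
  have hAr : lA ∈ r := label_mem_of_mem_paths hr
  have of_subset : ∀ p' ∈ (node lB (csBB ++ [A'])).paths, p ⊆ p' →
      ∃ p' ∈ (node lB (csBB ++ [A'])).paths, ∀ l ∈ p, (l ∩ Q.schemas i).Nonempty → l ∈ p' :=
    fun p' hp' hsub => ⟨p', hp', fun _ hl _ => hsub hl⟩
  obtain ⟨q, hq, rfl⟩ := (mem_paths_node_of_ne_nil (by simp)).1 hp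
  simp only [forestPaths_append, forestPaths_cons, List.mem_append] at hq
  rcases hq with hq₁ | hqB | hq₂
  · exact of_subset _ (under_A q (by simp [forestPaths_append, hq₁])) (List.subset_cons_self _ _)
  · obtain ⟨q₀, rfl, hq₀ | ⟨rfl, rfl⟩⟩ := mem_paths_node_iff.1 hqB
    · obtain ⟨u, hu, hq₀u⟩ := mem_forestPaths_iff.1 hq₀
      rcases List.mem_append.1 (hperm.subset hu) with hu | hu
      · by_cases hAi : (lA ∩ Q.schemas i).Nonempty
        · -- `u` stays below `lB` and has no node of relation `i`
          refine ⟨lB :: r, through_A, ?_⟩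
          rintro l hl hli
          rcases List.mem_cons.1 hl with rfl | hl
          · exact List.mem_cons_of_mem _ hAr
          rcases List.mem_cons.1 hl with rfl | hl
          · exact List.mem_cons_self
          · exact (hBB u hu i ⟨hAi, l, subset_nodes_of_mem_paths hq₀u hl, hli⟩).elim
        · refine ⟨lB :: q₀, under_B q₀ (mem_forestPaths_iff.2 ⟨u, hu, hq₀u⟩), ?_⟩
          rintro l hl hli
          rcases List.mem_cons.1 hl with rfl | hl
          · exact (hAi hli).elim
          exact hl
      · exact of_subset _ (under_A q₀ (by simp [forestPaths_append, mem_forestPaths_iff.2 ⟨u, hu, hq₀u⟩]))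
          (List.Perm.swap _ _ _).subset
    · exact of_subset _ through_A (by simp [hAr])
  · exact of_subset _ (under_A q (by simp [forestPaths_append, hq₂])) (List.subset_cons_self _ _)

theorem exists_covering_path (h : SwapStep Q F F') (i : Fin Q.n) :
    ∀ p ∈ forestPaths F, ∃ p' ∈ forestPaths F', ∀ l ∈ p, (l ∩ Q.schemas i).Nonempty → l ∈ p' := by
  induction h with
  | here hBB _ hperm =>
    intro p hp
    rcases List.mem_append.1 ((forestPaths_cons _ _) ▸ hp) with hp | hp
    · obtain ⟨p', hp', hcov⟩ := exists_path_of_here hBB hperm hp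
      exact ⟨p', by simp [forestPaths_cons, hp'], hcov⟩
    · exact ⟨p, by simp [forestPaths_cons, hp], fun _ hl _ => hl⟩
  | tail _ ih =>
    intro p hp
    rcases List.mem_append.1 ((forestPaths_cons _ _) ▸ hp) with hp | hp
    · exact ⟨p, by simp [forestPaths_cons, hp], fun _ hl _ => hl⟩
    · obtain ⟨p', hp', hcov⟩ := ih p hp
      exact ⟨p', by simp [forestPaths_cons, hp'], hcov⟩
  | @inside l _ _ _ hs ih =>
    intro p hp
    rcases List.mem_append.1 ((forestPaths_cons _ _) ▸ hp) with hp | hp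
    · obtain ⟨q, hq, rfl⟩ := (mem_paths_node_of_ne_nil hs.ne_nil).1 hp
      obtain ⟨q', hq', hcov⟩ := ih q hq
      refine ⟨l :: q', by simp [forestPaths_cons, cons_mem_paths_node hq'], ?_⟩
      rintro x (_ | ⟨_, hx⟩) hxi
      exacts [List.mem_cons_self, List.mem_cons_of_mem _ (hcov x hx hxi)]
    · exact ⟨p, by simp [forestPaths_cons, hp], fun _ hl _ => hl⟩

theorem pathConstraint (h : SwapStep Q F F') (hpc : Q.PathConstraint F) :
    Q.PathConstraint F' := by
  intro i
  obtain ⟨p, hp, hcov⟩ := hpc i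
  obtain ⟨p', hp', hcov'⟩ := h.exists_covering_path i p hp
  exact ⟨p', hp', fun l hl hli => hcov' l (hcov l (h.forestNodes_perm.mem_iff.2 hl) hli) hli⟩

end SwapStep

section Swaps

open Relation

variable {Q : Query} {F F' : Forest}

theorem forestNodes_perm_of_swaps (h : ReflTransGen (SwapStep Q) F F') :
    (forestNodes F).Perm (forestNodes F') := by
  induction h with
  | refl => rfl
  | tail _ hs ih => exact ih.trans hs.forestNodes_perm

theorem reflTransGen_swapStep_and_pathConstraint (h : ReflTransGen (SwapStep Q) F F')
    (hpc : Q.PathConstraint F) :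
    ReflTransGen (fun X Y => SwapStep Q X Y ∧ Q.PathConstraint Y) F F' := by
  induction h using ReflTransGen.head_induction_on with
  | refl => exact .refl
  | head hs _ ih => exact .head ⟨hs, hs.pathConstraint hpc⟩ (ih (hs.pathConstraint hpc))

theorem exists_swaps_to_root {x : Finset Att} :
    ∀ {t : FTree}, x ∈ t.nodes → ∀ rest : Forest,
      ∃ u : FTree, u.label = x ∧ ReflTransGen (SwapStep Q) (t :: rest) (u :: rest) := by
  intro t
  induction t using FTree.induction with
  | node l cs ih =>
    intro hx rest
    rw [nodes_node, List.mem_cons] at hx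
    rcases hx with rfl | hx
    · exact ⟨_, rfl, .refl⟩
    obtain ⟨c, hc, hxc⟩ := mem_forestNodes_iff.1 hx
    obtain ⟨cs₁, cs₂, rfl⟩ := List.append_of_mem hc
    obtain ⟨⟨_, csB⟩, hlabel, hraise⟩ := ih c hc hxc cs₂
    cases hlabel
    obtain ⟨t, ht, hswap⟩ := SwapStep.exists_here Q l _ cs₁ cs₂ csB rest
    refine ⟨t, ht, .tail ?_ hswap⟩
    exact hraise.lift (fun cs => node l (cs₁ ++ cs) :: rest) fun _ _ h => (h.append_left cs₁).inside

theorem exists_swaps_to_root_of_mem {t : FTree} {x : Finset Att} (ht : t ∈ F)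
    (hx : x ∈ t.nodes) :
    ∃ F' u, ReflTransGen (SwapStep Q) F F' ∧ u ∈ F' ∧ u.label = x ∧ ∀ s ∈ F, s ≠ t → s ∈ F' := by
  obtain ⟨F₁, F₂, rfl⟩ := List.append_of_mem ht
  obtain ⟨u, hu, hraise⟩ := exists_swaps_to_root hx F₂
  refine ⟨F₁ ++ u :: F₂, u, hraise.lift (F₁ ++ ·) fun _ _ h => h.append_left F₁, by simp, hu, ?_⟩
  intro s hs hst
  simp only [List.mem_append, List.mem_cons] at hs ⊢
  tauto

end Swaps

/-- **reachability by swaps.** From any f-tree `T` of `Q`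
satisfying the path constraint, any two nodes `𝒜` and `ℬ` can be brought into
sibling or ancestor-descendant position by a finite sequence of swap
operations, each preserving the path constraint. -/
theorem swaps_reach_selection_position (Q : Query) (hQ : Q.WF) (T : Forest)
    (hT : Q.IsFTreeOf T) (hpc : Q.PathConstraint T)
    (lA lB : Finset Att) (hA : lA ∈ forestNodes T) (hB : lB ∈ forestNodes T)
    (hne : lA ≠ lB) :
    ∃ T' : Forest,
      Relation.ReflTransGen (fun X Y => SwapStep Q X Y ∧ Q.PathConstraint Y) T T' ∧
      Q.IsFTreeOf T' ∧
      (Siblings T' lA lB ∨ OnSamePath T' lA lB) := by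
  obtain ⟨t, ht, hAt⟩ := mem_forestNodes_iff.1 hA
  obtain ⟨T₁, u, h₁, hu, rfl, -⟩ := exists_swaps_to_root_of_mem (Q := Q) ht hAt
  by_cases hBu : lB ∈ u.nodes
  · exact ⟨T₁, reflTransGen_swapStep_and_pathConstraint h₁ hpc,
      hT.of_perm (forestNodes_perm_of_swaps h₁), Or.inr (onSamePath_label_of_mem_nodes hu hBu)⟩
  obtain ⟨v, hv, hBv⟩ := mem_forestNodes_iff.1 ((forestNodes_perm_of_swaps h₁).mem_iff.1 hB)
  obtain ⟨T₂, w, h₂, hw, rfl, hkeep⟩ := exists_swaps_to_root_of_mem hv hBv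
  have huT₂ : u ∈ T₂ := hkeep u hu fun huv => hBu (huv ▸ hBv)
  exact ⟨T₂, reflTransGen_swapStep_and_pathConstraint (h₁.trans h₂) hpc,
    hT.of_perm (forestNodes_perm_of_swaps (h₁.trans h₂)), Or.inl (siblings_labels_of_mem huT₂ hw)⟩
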